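/- arXiv:2507.16301 — 2 statements merged into one kernel-verified Lean document; each statement's English description precedes it below -/
import Mathlib

section
/- For every simple graph G, the total chromatic number of its central graph satisfies χ''(C(G)) ≤ Δ(C(G)) + 2; that is, the Total-Coloring Conjecture holds for the central graph of any graph. -/
open SimpleGraph

/-- The subdivision graph `S(G)`: each edge `{u,v}` of `G` is replaced by a new
vertex (the element of `G.edgeSet`) adjacent to both `u` and `v`. -/
def subdivisionGraph {V : Type*} (G : SimpleGraph V) : SimpleGraph (V ⊕ G.edgeSet) where
  Adj x y :=
    match x, y with
    | Sum.inl u, Sum.inr e => u ∈ (e : Sym2 V)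
    | Sum.inr e, Sum.inl u => u ∈ (e : Sym2 V)
    | _, _ => False
  symm := by constructor; rintro (u | e) (v | f) h <;> simp_all
  loopless := by constructor; rintro (u | e) h <;> simp_all

/-- The central graph `C(G)`: obtained from the subdivision graph `S(G)` by joining
every pair of distinct vertices of `G` that are non-adjacent in `G`. -/
def centralGraph {V : Type*} (G : SimpleGraph V) : SimpleGraph (V ⊕ G.edgeSet) where
  Adj x y :=
    match x, y with
    | Sum.inl u, Sum.inl v => u ≠ v ∧ ¬ G.Adj u v
    | Sum.inl u, Sum.inr e => u ∈ (e : Sym2 V)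
    | Sum.inr e, Sum.inl u => u ∈ (e : Sym2 V)
    | Sum.inr _, Sum.inr _ => False
  symm := by
    constructor
    rintro (u | e) (v | f) h
    · exact ⟨h.1.symm, fun a => h.2 a.symm⟩
    · exact h
    · exact h
    · exact h
  loopless := by
    constructor
    rintro (u | e) h
    · exact h.1 rfl
    · exact h

/-- The middle graph `M(G)`: obtained from the subdivision graph `S(G)` by joining
each pair of distinct subdivided vertices corresponding to adjacent edges of `G`. -/
def middleGraph {V : Type*} (G : SimpleGraph V) : SimpleGraph (V ⊕ G.edgeSet) where
  Adj x y :=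
    match x, y with
    | Sum.inl u, Sum.inr e => u ∈ (e : Sym2 V)
    | Sum.inr e, Sum.inl u => u ∈ (e : Sym2 V)
    | Sum.inr e, Sum.inr f => e ≠ f ∧ ∃ u, u ∈ (e : Sym2 V) ∧ u ∈ (f : Sym2 V)
    | Sum.inl _, Sum.inl _ => False
  symm := by
    constructor
    rintro (u | e) (v | f) h
    · exact h
    · exact h
    · exact h
    · exact ⟨h.1.symm, h.2.imp fun u hu => ⟨hu.2, hu.1⟩⟩
  loopless := by
    constructor
    rintro (u | e) h
    · exact h
    · exact h.1 rfl

/-- The line graph `L(G)`: vertices are the edges of `G`, two distinct edges being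
adjacent when they share an endpoint. -/
def lineG {V : Type*} (G : SimpleGraph V) : SimpleGraph G.edgeSet where
  Adj e f := e ≠ f ∧ ∃ u, u ∈ (e : Sym2 V) ∧ u ∈ (f : Sym2 V)
  symm := ⟨fun e f h => ⟨h.1.symm, h.2.imp fun u hu => ⟨hu.2, hu.1⟩⟩⟩
  loopless := ⟨fun e h => h.1 rfl⟩

/-- The endline graph `G⁺`: to each vertex `v` of `G` we attach a new pendant
vertex; `Sum.inl` is the copy of `V(G)` and `Sum.inr` are the new vertices. -/
def endlineGraph {V : Type*} (G : SimpleGraph V) : SimpleGraph (V ⊕ V) where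
  Adj x y :=
    match x, y with
    | Sum.inl u, Sum.inl v => G.Adj u v
    | Sum.inl u, Sum.inr v => u = v
    | Sum.inr u, Sum.inl v => u = v
    | Sum.inr _, Sum.inr _ => False
  symm := by
    constructor
    rintro (u | u) (v | v) h
    · exact h.symm
    · exact h.symm
    · exact h.symm
    · exact h
  loopless := by
    constructor
    rintro (u | u) h
    · exact G.loopless.irrefl u h
    · exact h

/-- The join `G₁ + G₂` of two vertex-disjoint graphs: their disjoint union together
with all edges between the two vertex sets. -/
def joinGraph {V₁ V₂ : Type*} (G₁ : SimpleGraph V₁) (G₂ : SimpleGraph V₂) :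
    SimpleGraph (V₁ ⊕ V₂) where
  Adj x y :=
    match x, y with
    | Sum.inl u, Sum.inl v => G₁.Adj u v
    | Sum.inr u, Sum.inr v => G₂.Adj u v
    | Sum.inl _, Sum.inr _ => True
    | Sum.inr _, Sum.inl _ => True
  symm := by
    constructor
    rintro (u | u) (v | v) h
    · exact h.symm
    · trivial
    · trivial
    · exact h.symm
  loopless := by
    constructor
    rintro (u | u) h
    · exact G₁.loopless.irrefl u h
    · exact G₂.loopless.irrefl u h

/-- The maximum degree `Δ(H)` of a graph (as a supremum of cardinalities of
neighborhoods, which agrees with the usual maximum degree for finite graphs). -/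
noncomputable def maxDeg {W : Type*} (H : SimpleGraph W) : ℕ :=
  sSup {k | ∃ v : W, k = (H.neighborSet v).ncard}

/-- A graph is regular if all vertices have the same degree. -/
def IsRegularGraph {W : Type*} (H : SimpleGraph W) : Prop :=
  ∀ u v : W, (H.neighborSet u).ncard = (H.neighborSet v).ncard

/-- The distinguishing number `D(H)`: the least `d` such that `H` admits a vertex
coloring with `d` colors preserved only by the identity automorphism. -/
noncomputable def distinguishingNumber {W : Type*} (H : SimpleGraph W) : ℕ :=
  sInf {d | ∃ c : W → Fin d, ∀ φ : H ≃g H, (∀ v, c (φ v) = c v) → ∀ v, φ v = v}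

/-- The distinguishing index `D'(H)`: the least `d` such that `H` admits an edge
coloring with `d` colors preserved only by the identity automorphism. -/
noncomputable def distinguishingIndex {W : Type*} (H : SimpleGraph W) : ℕ :=
  sInf {d | ∃ c : H.edgeSet → Fin d,
    ∀ φ : H ≃g H, (∀ e, c (φ.mapEdgeSet e) = c e) → ∀ v, φ v = v}

/-- A proper total coloring of `H` with `d` colors: adjacent vertices, adjacent
edges, and incident vertex/edge pairs receive distinct colors. -/
def IsProperTotalColoring {W : Type*} (H : SimpleGraph W) {d : ℕ}
    (f : W ⊕ H.edgeSet → Fin d) : Prop :=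
  (∀ u v : W, H.Adj u v → f (Sum.inl u) ≠ f (Sum.inl v)) ∧
  (∀ e e' : H.edgeSet, e ≠ e' → (∃ u, u ∈ (e : Sym2 W) ∧ u ∈ (e' : Sym2 W)) →
    f (Sum.inr e) ≠ f (Sum.inr e')) ∧
  (∀ (v : W) (e : H.edgeSet), v ∈ (e : Sym2 W) → f (Sum.inl v) ≠ f (Sum.inr e))

/-- An automorphism `φ` preserves a total coloring `f`. -/
def PreservesTotalColoring {W : Type*} (H : SimpleGraph W) {d : ℕ}
    (f : W ⊕ H.edgeSet → Fin d) (φ : H ≃g H) : Prop :=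
  (∀ v : W, f (Sum.inl (φ v)) = f (Sum.inl v)) ∧
  (∀ e : H.edgeSet, f (Sum.inr (φ.mapEdgeSet e)) = f (Sum.inr e))

/-- The total chromatic number `χ''(H)`. -/
noncomputable def totalChromaticNumber {W : Type*} (H : SimpleGraph W) : ℕ :=
  sInf {d | ∃ f : W ⊕ H.edgeSet → Fin d, IsProperTotalColoring H f}

/-- The total distinguishing chromatic number `χ''_D(H)`: the least `d` such that
`H` has a proper total coloring with `d` colors preserved only by the identity. -/
noncomputable def totalDistinguishingChromaticNumber {W : Type*} (H : SimpleGraph W) : ℕ :=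
  sInf {d | ∃ f : W ⊕ H.edgeSet → Fin d, IsProperTotalColoring H f ∧
    ∀ φ : H ≃g H, PreservesTotalColoring H f φ → ∀ v, φ v = v}

/-- The color class `C_H(u)` of a vertex under a total coloring: the color of `u`
together with the colors of the edges incident to `u`. -/
def totalColorClass {W : Type*} (H : SimpleGraph W) {d : ℕ}
    (f : W ⊕ H.edgeSet → Fin d) (u : W) : Set (Fin d) :=
  {f (Sum.inl u)} ∪ {x | ∃ e : H.edgeSet, u ∈ (e : Sym2 W) ∧ x = f (Sum.inr e)}

/-- An AVD-total coloring: a proper total coloring in which adjacent vertices have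
distinct color classes. -/
def IsAVDTotalColoring {W : Type*} (H : SimpleGraph W) {d : ℕ}
    (f : W ⊕ H.edgeSet → Fin d) : Prop :=
  IsProperTotalColoring H f ∧
  ∀ u v : W, H.Adj u v → totalColorClass H f u ≠ totalColorClass H f v

/-- The AVD-total chromatic number `χ''ₐ(H)`. -/
noncomputable def avdTotalChromaticNumber {W : Type*} (H : SimpleGraph W) : ℕ :=
  sInf {d | ∃ f : W ⊕ H.edgeSet → Fin d, IsAVDTotalColoring H f}

/-- A total dominator coloring: a proper vertex coloring such that every vertex is
adjacent to every vertex of some (nonempty) color class. -/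
def IsTotalDominatorColoring {W : Type*} (H : SimpleGraph W) {d : ℕ}
    (c : W → Fin d) : Prop :=
  (∀ u v : W, H.Adj u v → c u ≠ c v) ∧
  (∀ v : W, ∃ i : Fin d, (∃ w, c w = i) ∧ ∀ w, c w = i → H.Adj v w)

/-- The total dominator chromatic number `χᵗ_d(H)`. -/
noncomputable def tdChromaticNumber {W : Type*} (H : SimpleGraph W) : ℕ :=
  sInf {d | ∃ c : W → Fin d, IsTotalDominatorColoring H c}


/-!
Let `n = |V|`. Every vertex of `G` has degree `n - 1` in `C(G)`, so it suffices to colour `C(G)`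
totally with `n + 1` colours (with `4` colours when `n ≤ 3` and `G` has an edge, since a
subdivision vertex already has degree `2`). Take colours in `ℤ/(n+1)`, label the vertices of `G`
injectively by `ι` avoiding one value `c`, colour the vertex `u` by `ι u + c` and the complement
edge `uw` by `ι u + ι w`. The edge from `u` to the subdivision vertex of `uv` is coloured
`ι u + ι y` for some `y` in the closed neighbourhood of `u`; these choices are a list colouring of
the darts of `G` whose lists exceed the number of conflicting darts, so a greedy choice works.
Each subdivision vertex then sees only four colours, leaving a free one when `n ≥ 4`; for
`n ≤ 3` an explicit choice of the dart colours creates a coincidence among those four.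
-/
open Function

namespace SimpleGraph

section ListColoring

variable {W α : Type*}

theorem exists_listColoring [Fintype W] [DecidableEq α] (H : SimpleGraph W) [DecidableRel H.Adj]
    (L : W → Finset α) (hL : ∀ w, H.degree w < (L w).card) :
    ∃ col : W → α, (∀ w, col w ∈ L w) ∧ ∀ v w, H.Adj v w → col v ≠ col w := by
  classical
  suffices h : ∀ s : Finset W, ∃ col : W → α, (∀ w, col w ∈ L w) ∧
      ∀ v ∈ s, ∀ w ∈ s, H.Adj v w → col v ≠ col w by
    obtain ⟨col, hL, hcol⟩ := h Finset.univ
    exact ⟨col, hL, fun v w => hcol v (Finset.mem_univ _) w (Finset.mem_univ _)⟩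
  intro s
  induction s using Finset.induction_on with
  | empty =>
    have hne (w : W) : (L w).Nonempty := Finset.card_pos.mp (Nat.zero_lt_of_lt (hL w))
    exact ⟨fun w => (hne w).choose, fun w => (hne w).choose_spec, by simp⟩
  | @insert a s has ih =>
    obtain ⟨col, hcolL, hcol⟩ := ih
    have hused : ((H.neighborFinset a).image col).card < (L a).card :=
      Finset.card_image_le.trans_lt (by rw [card_neighborFinset_eq_degree]; exact hL a)
    obtain ⟨x, hxL, hx⟩ := Finset.exists_mem_notMem_of_card_lt_card hused
    have hx_ne {w : W} (hw : H.Adj a w) : x ≠ col w := fun h =>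
      hx (Finset.mem_image.2 ⟨w, (mem_neighborFinset H a w).2 hw, h.symm⟩)
    refine ⟨update col a x, fun w => ?_, ?_⟩
    · by_cases hw : w = a
      · subst hw; simpa using hxL
      · simpa [hw] using hcolL w
    · intro v hv w hw hvw
      rcases Finset.mem_insert.1 hv with rfl | hv <;> rcases Finset.mem_insert.1 hw with rfl | hw
      · exact (hvw.ne rfl).elim
      · simpa [hvw.ne'] using hx_ne hvw
      · simpa [hvw.ne] using (hx_ne hvw.symm).symm
      · simpa [ne_of_mem_of_not_mem hv has, ne_of_mem_of_not_mem hw has] using hcol v hv w hw hvw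

end ListColoring

section DartColoring

variable {V α : Type*} (G : SimpleGraph V)

def dartConflictGraph : SimpleGraph G.Dart :=
  fromRel fun d d' => d.fst = d'.fst ∨ d' = d.symm

theorem degree_dartConflictGraph_le [Fintype V] [DecidableEq V] [DecidableRel G.Adj] (d : G.Dart)
    [Fintype ((dartConflictGraph G).neighborSet d)] :
    (dartConflictGraph G).degree d ≤ G.degree d.fst := by
  classical
  have hsub : (dartConflictGraph G).neighborFinset d ⊆
      insert d.symm ((Finset.univ.filter fun d' : G.Dart => d'.fst = d.fst).erase d) := by
    intro d' hd'
    rw [mem_neighborFinset, dartConflictGraph, fromRel_adj] at hd'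
    obtain ⟨hne, (hfst | rfl) | (hfst | rfl)⟩ := hd'
    · exact Finset.mem_insert_of_mem (Finset.mem_erase.2 ⟨Ne.symm hne, by simp [hfst]⟩)
    · exact Finset.mem_insert_self _ _
    · exact Finset.mem_insert_of_mem (Finset.mem_erase.2 ⟨Ne.symm hne, by simp [hfst]⟩)
    · exact Finset.mem_insert.2 (Or.inl (Dart.symm_symm _).symm)
  have hd : d ∈ Finset.univ.filter fun d' : G.Dart => d'.fst = d.fst := by simp
  calc (dartConflictGraph G).degree d
      ≤ ((Finset.univ.filter fun d' : G.Dart => d'.fst = d.fst).erase d).card + 1 := by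
        rw [← card_neighborFinset_eq_degree]
        exact (Finset.card_le_card hsub).trans (Finset.card_insert_le _ _)
    _ = G.degree d.fst := by
        rw [Finset.card_erase_of_mem hd, Nat.sub_add_cancel (Finset.card_pos.2 ⟨d, hd⟩),
          dart_fst_fiber_card_eq_degree]

/-- `π u v` is the colour of the edge of the central graph joining `u` to the subdivision vertex
of `uv`. Writing it as `ι u + ι y` with `y` in the closed neighbourhood of `u` keeps it away from
the colours `ι u + ι w` of the edges `uw` of the complement at `u`. -/
structure IsDartColoring [Add α] (ι : V → α) (π : V → V → α) : Prop where
  exists_eq_add : ∀ ⦃u v⦄, G.Adj u v → ∃ y, (y = u ∨ G.Adj u y) ∧ π u v = ι u + ι y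
  ne_of_ne : ∀ ⦃u v w⦄, G.Adj u v → G.Adj u w → v ≠ w → π u v ≠ π u w
  ne_swap : ∀ ⦃u v⦄, G.Adj u v → π u v ≠ π v u

theorem exists_isDartColoring [Fintype V] [Add α] [IsLeftCancelAdd α] [DecidableEq α] {ι : V → α}
    (hι : Injective ι) : ∃ π, G.IsDartColoring ι π := by
  classical
  let L (d : G.Dart) : Finset α :=
    (insert d.fst (G.neighborFinset d.fst)).image fun y => ι d.fst + ι y
  have hL (d : G.Dart) : (dartConflictGraph G).degree d < (L d).card := by
    rw [Finset.card_image_of_injective _ fun a b hab => hι (add_left_cancel hab),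
      Finset.card_insert_of_notMem (by simp), card_neighborFinset_eq_degree]
    exact Nat.lt_succ_of_le (degree_dartConflictGraph_le G d)
  obtain ⟨col, hcolL, hcol⟩ := exists_listColoring _ L hL
  let π (u v : V) : α := if h : G.Adj u v then col ⟨(u, v), h⟩ else ι u
  have hπ {u v : V} (h : G.Adj u v) : π u v = col ⟨(u, v), h⟩ := dif_pos h
  refine ⟨π, fun u v h => ?_, fun u v w hv hw hvw => ?_, fun u v h => ?_⟩
  · obtain ⟨y, hy, hyc⟩ := Finset.mem_image.1 (hcolL ⟨(u, v), h⟩)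
    refine ⟨y, ?_, by rw [hπ h, ← hyc]⟩
    simpa [or_iff_not_imp_left] using hy
  · rw [hπ hv, hπ hw]
    refine hcol _ _ ((fromRel_adj _ _ _).2 ⟨fun he => hvw ?_, Or.inl (Or.inl rfl)⟩)
    exact congrArg (fun d : G.Dart => d.snd) he
  · rw [hπ h, hπ h.symm]
    refine hcol _ _ ((fromRel_adj _ _ _).2 ⟨fun he => h.ne ?_, Or.inl (Or.inr rfl)⟩)
    exact congrArg (fun d : G.Dart => d.fst) he

end DartColoring

section TotalColoring

variable {W : Type*} (H : SimpleGraph W) {d : ℕ}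

def totalColoringOf (κ : W → Fin d) (g : W → W → Fin d) (hg : ∀ x y, g x y = g y x) :
    W ⊕ H.edgeSet → Fin d :=
  Sum.elim κ fun e => Sym2.lift ⟨g, hg⟩ e

theorem totalColoringOf_inr {κ : W → Fin d} {g : W → W → Fin d} (hg : ∀ x y, g x y = g y x)
    {e : H.edgeSet} {x y : W} (he : (e : Sym2 W) = s(x, y)) :
    totalColoringOf H κ g hg (.inr e) = g x y := by
  simp [totalColoringOf, he]

theorem isProperTotalColoring_totalColoringOf {κ : W → Fin d} {g : W → W → Fin d}
    (hg : ∀ x y, g x y = g y x) (hκ : ∀ ⦃x y⦄, H.Adj x y → κ x ≠ κ y)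
    (hg_ne : ∀ ⦃x y y'⦄, H.Adj x y → H.Adj x y' → y ≠ y' → g x y ≠ g x y')
    (hκg : ∀ ⦃x y⦄, H.Adj x y → κ x ≠ g x y) :
    IsProperTotalColoring H (totalColoringOf H κ g hg) := by
  refine ⟨hκ, fun e e' hee' ⟨x, hx, hx'⟩ => ?_, fun x e hx => ?_⟩
  · obtain ⟨y, hy⟩ := Sym2.mem_iff_exists.1 hx
    obtain ⟨y', hy'⟩ := Sym2.mem_iff_exists.1 hx'
    have hadj : H.Adj x y := by simpa [hy] using e.2
    have hadj' : H.Adj x y' := by simpa [hy'] using e'.2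
    rw [totalColoringOf_inr H hg hy, totalColoringOf_inr H hg hy']
    exact hg_ne hadj hadj' fun h => hee' (Subtype.ext (by rw [hy, hy', h]))
  · obtain ⟨y, hy⟩ := Sym2.mem_iff_exists.1 hx
    rw [totalColoringOf_inr H hg hy]
    exact hκg (by simpa [hy] using e.2)

end TotalColoring

section CentralGraph

variable {V α : Type*} (G : SimpleGraph V)

theorem exists_adj_eq_mk_of_mem {e : G.edgeSet} {u : V} (hu : u ∈ (e : Sym2 V)) :
    ∃ v, G.Adj u v ∧ (e : Sym2 V) = s(u, v) := by
  obtain ⟨v, hv⟩ := Sym2.mem_iff_exists.1 hu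
  exact ⟨v, by simpa [hv] using e.2, hv⟩

variable {G} in
theorem IsDartColoring.ne_add_of_not_adj [Add α] [IsLeftCancelAdd α] {ι : V → α} {π : V → V → α}
    (hπ : G.IsDartColoring ι π) (hι : Injective ι) {u v w : V} (huv : G.Adj u v) (hwu : w ≠ u)
    (huw : ¬G.Adj u w) : π u v ≠ ι u + ι w := by
  obtain ⟨y, hy, hπy⟩ := hπ.exists_eq_add huv
  rw [hπy]
  intro h
  obtain rfl := hι (add_left_cancel h)
  exact hy.elim hwu huw

variable {G} in
theorem IsDartColoring.ne_add [Add α] [IsLeftCancelAdd α] {ι : V → α} {π : V → V → α}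
    (hπ : G.IsDartColoring ι π) {c : α} (hc : ∀ v, ι v ≠ c) {u v : V} (huv : G.Adj u v) :
    π u v ≠ ι u + c := by
  obtain ⟨y, -, hπy⟩ := hπ.exists_eq_add huv
  rw [hπy]
  exact fun h => hc y (add_left_cancel h)

open Classical in
noncomputable def pendantColor (π : V → V → α) (u : V) (e : Sym2 V) : α :=
  if h : u ∈ e then π u (Sym2.Mem.other h) else π u u

theorem pendantColor_mk (π : V → V → α) (u v : V) : pendantColor π u s(u, v) = π u v := by
  have h : u ∈ s(u, v) := Sym2.mem_mk_left u v
  rw [pendantColor, dif_pos h, Sym2.congr_right.1 (Sym2.other_spec h)]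

theorem pendantColor_of_eq {π : V → V → α} {u v : V} {e : Sym2 V} (he : e = s(u, v)) :
    pendantColor π u e = π u v := by
  rw [he, pendantColor_mk]

noncomputable def centralEdgeColor [AddCommMonoid α] (ι : V → α) (π : V → V → α) :
    V ⊕ G.edgeSet → V ⊕ G.edgeSet → α
  | .inl u, .inl w => ι u + ι w
  | .inl u, .inr e => pendantColor π u e
  | .inr e, .inl u => pendantColor π u e
  | .inr _, .inr _ => 0

theorem centralEdgeColor_comm [AddCommMonoid α] (ι : V → α) (π : V → V → α)
    (x y : V ⊕ G.edgeSet) : centralEdgeColor G ι π x y = centralEdgeColor G ι π y x := by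
  rcases x with u | e <;> rcases y with w | f <;> simp [centralEdgeColor, add_comm]

theorem centralEdgeColor_ne [AddCancelCommMonoid α] {ι : V → α} (hι : Injective ι)
    {π : V → V → α} (hπ : G.IsDartColoring ι π) ⦃z x x' : V ⊕ G.edgeSet⦄
    (hx : (centralGraph G).Adj z x) (hx' : (centralGraph G).Adj z x') (hne : x ≠ x') :
    centralEdgeColor G ι π z x ≠ centralEdgeColor G ι π z x' := by
  rcases z with u | e
  · have hmixed {w : V} {f : G.edgeSet} (hw : (centralGraph G).Adj (.inl u) (.inl w))
        (hf : (centralGraph G).Adj (.inl u) (.inr f)) :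
        centralEdgeColor G ι π (.inl u) (.inl w) ≠ centralEdgeColor G ι π (.inl u) (.inr f) := by
      obtain ⟨v, huv, hf⟩ := exists_adj_eq_mk_of_mem G hf
      show ι u + ι w ≠ pendantColor π u f
      rw [pendantColor_of_eq hf]
      exact (hπ.ne_add_of_not_adj hι huv (Ne.symm hw.1) hw.2).symm
    rcases x with w | f <;> rcases x' with w' | f'
    · exact fun h => hne (congrArg Sum.inl (hι (add_left_cancel h)))
    · exact hmixed hx hx'
    · exact (hmixed hx' hx).symm
    · obtain ⟨v, huv, hf⟩ := exists_adj_eq_mk_of_mem G hx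
      obtain ⟨v', huv', hf'⟩ := exists_adj_eq_mk_of_mem G hx'
      refine (pendantColor_of_eq hf).trans_ne (Ne.trans_eq ?_ (pendantColor_of_eq hf').symm)
      exact hπ.ne_of_ne huv huv' fun h => hne (congrArg Sum.inr (Subtype.ext (by rw [hf, hf', h])))
  · rcases x with a | _ <;> rcases x' with b | _
    · have hab : a ≠ b := fun h => hne (congrArg Sum.inl h)
      have he : (e : Sym2 V) = s(a, b) := (Sym2.mem_and_mem_iff hab).1 ⟨hx, hx'⟩
      have hadj : G.Adj a b := by simpa [he] using e.2
      have he' : (e : Sym2 V) = s(b, a) := by rw [he, Sym2.eq_swap]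
      exact (pendantColor_of_eq he).trans_ne
        ((hπ.ne_swap hadj).trans_eq (pendantColor_of_eq he').symm)
    all_goals first | exact hx'.elim | exact hx.elim

variable {d : ℕ} [NeZero d]

noncomputable def centralColoring (ι : V → Fin d) (c : Fin d) (π : V → V → Fin d)
    (τ : G.edgeSet → Fin d) : (V ⊕ G.edgeSet) ⊕ (centralGraph G).edgeSet → Fin d :=
  totalColoringOf (centralGraph G) (Sum.elim (fun u => ι u + c) τ) (centralEdgeColor G ι π)
    (centralEdgeColor_comm G ι π)

theorem isProperTotalColoring_centralColoring {ι : V → Fin d} (hι : Injective ι) {c : Fin d}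
    (hc : ∀ v, ι v ≠ c) {π : V → V → Fin d} (hπ : G.IsDartColoring ι π) {τ : G.edgeSet → Fin d}
    (hτ : ∀ (e : G.edgeSet) (a b : V), (e : Sym2 V) = s(a, b) → τ e ≠ π a b ∧ τ e ≠ ι a + c) :
    IsProperTotalColoring (centralGraph G) (centralColoring G ι c π τ) := by
  apply isProperTotalColoring_totalColoringOf
  · rintro (u | e) (w | f) h
    · exact fun h' => h.1 (hι (add_right_cancel h'))
    · obtain ⟨v, -, hf⟩ := exists_adj_eq_mk_of_mem G h
      exact (hτ f u v hf).2.symm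
    · obtain ⟨v, -, he⟩ := exists_adj_eq_mk_of_mem G h
      exact (hτ e w v he).2
    · exact h.elim
  · exact centralEdgeColor_ne G hι hπ
  · rintro (u | e) (w | f) h
    · exact fun h' => hc w (add_left_cancel h').symm
    · obtain ⟨v, huv, hf⟩ := exists_adj_eq_mk_of_mem G h
      exact Ne.trans_eq (hπ.ne_add hc huv).symm (pendantColor_of_eq hf).symm
    · obtain ⟨v, -, he⟩ := exists_adj_eq_mk_of_mem G h
      exact Ne.trans_eq (hτ e w v he).1 (pendantColor_of_eq he).symm
    · exact h.elim

theorem totalChromaticNumber_centralGraph_le {ι : V → Fin d} (hι : Injective ι) {c : Fin d}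
    (hc : ∀ v, ι v ≠ c) {π : V → V → Fin d} (hπ : G.IsDartColoring ι π)
    (hfree : ∀ ⦃u v⦄, G.Adj u v → ∃ x, x ≠ π u v ∧ x ≠ π v u ∧ x ≠ ι u + c ∧ x ≠ ι v + c) :
    totalChromaticNumber (centralGraph G) ≤ d := by
  have hτ (e : G.edgeSet) : ∃ x, ∀ a b, (e : Sym2 V) = s(a, b) → x ≠ π a b ∧ x ≠ ι a + c := by
    obtain ⟨e, he⟩ := e
    induction e using Sym2.ind with
    | h u v =>
      obtain ⟨x, h₁, h₂, h₃, h₄⟩ := hfree he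
      refine ⟨x, fun a b hab => ?_⟩
      rcases Sym2.eq_iff.1 hab with ⟨rfl, rfl⟩ | ⟨rfl, rfl⟩
      exacts [⟨h₁, h₃⟩, ⟨h₂, h₄⟩]
  choose τ hτ using hτ
  exact Nat.sInf_le ⟨_, isProperTotalColoring_centralColoring G hι hc hπ hτ⟩

end CentralGraph

theorem ncard_neighborSet_le_maxDeg {W : Type*} [Finite W] (H : SimpleGraph W) (w : W) :
    (H.neighborSet w).ncard ≤ maxDeg H :=
  le_csSup ⟨Nat.card W, by rintro k ⟨v, rfl⟩; exact Set.ncard_le_card _⟩ ⟨w, rfl⟩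

section Degrees

variable {V : Type*} (G : SimpleGraph V)

theorem card_le_maxDeg_centralGraph_add_one [Fintype V] :
    Fintype.card V ≤ maxDeg (centralGraph G) + 1 := by
  classical
  rcases isEmpty_or_nonempty V with hV | ⟨⟨v⟩⟩
  · simp [Fintype.card_eq_zero]
  let φ (x : V) : V ⊕ G.edgeSet := if h : G.Adj v x then .inr ⟨s(v, x), h⟩ else .inl x
  have hmaps : ∀ x ∈ ({v}ᶜ : Set V), φ x ∈ (centralGraph G).neighborSet (.inl v) := by
    intro x hx
    by_cases h : G.Adj v x
    · simp only [φ, dif_pos h]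
      exact Sym2.mem_mk_left v x
    · simp only [φ, dif_neg h]
      exact ⟨Ne.symm hx, h⟩
  have hinj : Set.InjOn φ ({v}ᶜ : Set V) := by
    intro x _ y _ hxy
    by_cases hx : G.Adj v x <;> by_cases hy : G.Adj v y <;> simp [φ, hx, hy] at hxy
    · exact Sym2.congr_right.1 (congrArg Subtype.val hxy)
    · exact hxy
  have hcard := Set.ncard_le_ncard_of_injOn φ hmaps hinj
  rw [Set.ncard_compl, Set.ncard_singleton, Nat.card_eq_fintype_card] at hcard
  have := ncard_neighborSet_le_maxDeg (centralGraph G) (.inl v)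
  omega

theorem two_le_maxDeg_centralGraph [Finite V] {u v : V} (h : G.Adj u v) :
    2 ≤ maxDeg (centralGraph G) := by
  have hsub : {.inl u, .inl v} ⊆ (centralGraph G).neighborSet (.inr ⟨s(u, v), h⟩) := by
    rintro x (rfl | rfl)
    exacts [Sym2.mem_mk_left u v, Sym2.mem_mk_right u v]
  calc 2 = ({.inl u, .inl v} : Set (V ⊕ G.edgeSet)).ncard := by
        rw [Set.ncard_pair (by simpa using h.ne)]
    _ ≤ _ := Set.ncard_le_ncard hsub
    _ ≤ _ := ncard_neighborSet_le_maxDeg _ _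

end Degrees

section Cases

variable {V : Type*} [Fintype V] (G : SimpleGraph V)

theorem totalChromaticNumber_centralGraph_le_card_add_one (h : G = ⊥ ∨ 4 ≤ Fintype.card V) :
    totalChromaticNumber (centralGraph G) ≤ Fintype.card V + 1 := by
  set n := Fintype.card V
  let ι (v : V) : Fin (n + 1) := (Fintype.equivFin V v).castSucc
  have hι : Injective ι := (Fin.castSucc_injective n).comp (Fintype.equivFin V).injective
  obtain ⟨π, hπ⟩ := G.exists_isDartColoring hι
  refine totalChromaticNumber_centralGraph_le G hι (fun v => Fin.castSucc_ne_last _) hπ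
    fun u v huv => ?_
  have hn : 4 ≤ n := h.resolve_left fun hG => by subst hG; exact huv
  have hcard : ({π u v, π v u, ι u + Fin.last n, ι v + Fin.last n} : Finset (Fin (n + 1))).card <
      (Finset.univ : Finset (Fin (n + 1))).card := by
    rw [Finset.card_univ, Fintype.card_fin]
    exact Finset.card_le_four.trans_lt (by omega)
  obtain ⟨x, -, hx⟩ := Finset.exists_mem_notMem_of_card_lt_card hcard
  simp only [Finset.mem_insert, Finset.mem_singleton, not_or] at hx
  exact ⟨x, hx⟩

theorem exists_injective_fin_four (hn : Fintype.card V ≤ 3) {u₀ v₀ : V} (h : u₀ ≠ v₀) :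
    ∃ ι : V → Fin 4, Injective ι ∧ ι u₀ = 0 ∧ ι v₀ = 1 ∧ ∀ u, ι u ≠ 3 := by
  classical
  have hthird {u u' : V} (hu : u ≠ u₀ ∧ u ≠ v₀) (hu' : u' ≠ u₀ ∧ u' ≠ v₀) : u = u' := by
    by_contra hne
    have h4 : ({u₀, v₀, u, u'} : Finset V).card = 4 := by
      rw [Finset.card_insert_of_notMem, Finset.card_insert_of_notMem, Finset.card_pair hne]
      · simp [hu.2.symm, hu'.2.symm]
      · simp [h, hu.1.symm, hu'.1.symm]
    have := Finset.card_le_univ ({u₀, v₀, u, u'} : Finset V)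
    omega
  refine ⟨fun u => if u = u₀ then 0 else if u = v₀ then 1 else 2, fun u u' hu => ?_,
    if_pos rfl, by simp [h.symm], fun u => by dsimp only; split_ifs <;> decide⟩
  dsimp only at hu
  split_ifs at hu <;> first | (subst_vars; rfl) | exact absurd hu (by decide) |
    exact hthird ⟨‹_›, ‹_›⟩ ⟨‹_›, ‹_›⟩

/-- With the vertices of `G` labelled `0, 1, 2` and vertex `j` coloured `j + 3`, the edge towards
the subdivision vertex of `uv` at `u` takes the colour of `v`, except that for `v` labelled `0` it
takes `2`, the colour of no vertex. -/
def smallPendantColor (j : Fin 4) : Fin 4 := if j = 0 then 2 else j + 3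

theorem totalChromaticNumber_centralGraph_le_four (hn : Fintype.card V ≤ 3) {u₀ v₀ : V}
    (h₀ : G.Adj u₀ v₀) : totalChromaticNumber (centralGraph G) ≤ 4 := by
  obtain ⟨ι, hι, hι₀, hι₁, hι₃⟩ := exists_injective_fin_four hn h₀.ne
  have hι_ne {u v : V} (h : G.Adj u v) : ι u ≠ ι v := hι.ne h.ne
  have hcol_ne : ∀ i j : Fin 4, i ≠ 3 → j ≠ 3 → i ≠ j →
      smallPendantColor i ≠ smallPendantColor j := by
    decide
  have hπ : G.IsDartColoring ι fun _ v => smallPendantColor (ι v) := by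
    refine ⟨fun u v huv => ?_, fun u v w _ _ hvw => hcol_ne _ _ (hι₃ v) (hι₃ w) (hι.ne hvw),
      fun u v huv => hcol_ne _ _ (hι₃ v) (hι₃ u) (hι_ne huv).symm⟩
    have key : ∀ i j : Fin 4, i ≠ 3 → j ≠ 3 → i ≠ j → smallPendantColor j = i + i ∨
        smallPendantColor j = i + j ∨ (i ≠ 2 ∧ smallPendantColor j = 1) := by
      decide
    rcases key (ι u) (ι v) (hι₃ u) (hι₃ v) (hι_ne huv) with h | h | ⟨hu, h⟩
    · exact ⟨u, Or.inl rfl, h⟩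
    · exact ⟨v, Or.inr huv, h⟩
    rcases (by decide : ∀ i : Fin 4, i ≠ 2 → i ≠ 3 → i = 0 ∨ i = 1) _ hu (hι₃ u) with hu | hu
    · obtain rfl : u = u₀ := hι (hu.trans hι₀.symm)
      exact ⟨v₀, Or.inr h₀, by rw [h, hι₀, hι₁]; rfl⟩
    · obtain rfl : u = v₀ := hι (hu.trans hι₁.symm)
      exact ⟨u₀, Or.inr h₀.symm, by rw [h, hι₀, hι₁]; rfl⟩
  refine totalChromaticNumber_centralGraph_le G hι hι₃ hπ fun u v huv => ?_
  have key : ∀ i j : Fin 4, i ≠ 3 → j ≠ 3 → i ≠ j → ∃ x, x ≠ smallPendantColor j ∧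
      x ≠ smallPendantColor i ∧ x ≠ i + 3 ∧ x ≠ j + 3 := by
    decide
  exact key _ _ (hι₃ u) (hι₃ v) (hι_ne huv)

end Cases

end SimpleGraph

/-- The Total-Coloring Conjecture holds for the central graph of
any graph: `χ''(C(G)) ≤ Δ(C(G)) + 2`. -/
theorem stmt_10 {V : Type*} [Fintype V] (G : SimpleGraph V) :
    totalChromaticNumber (centralGraph G) ≤ maxDeg (centralGraph G) + 2 := by
  by_cases h : G = ⊥ ∨ 4 ≤ Fintype.card V
  · have := totalChromaticNumber_centralGraph_le_card_add_one G h
    have := card_le_maxDeg_centralGraph_add_one G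
    omega
  · obtain ⟨hG, hn⟩ := not_or.1 h
    obtain ⟨u, v, huv⟩ := ne_bot_iff_exists_adj.1 hG
    have := totalChromaticNumber_centralGraph_le_four G (by omega) huv
    have := two_le_maxDeg_centralGraph G huv
    omega
end

section
/- Let G be a connected regular simple graph of odd order n ≥ 5. Then the total distinguishing chromatic number of its central graph satisfies χ''_D(C(G)) = Δ(C(G)) + 1 = n; consequently C(G) is a Type 1 graph, i.e., χ''(C(G)) = Δ(C(G)) + 1. -/
/-!
Every total colouring needs `Δ + 1` colours, and `Δ(C(G)) = n - 1`: in `C(G)` an original vertex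
is joined to every other original vertex, directly or through the subdivision vertex of the edge
between them, while subdivision vertices have degree `2`.

For the upper bound, label `V(G)` bijectively by `κ : V → ZMod n` and pick for each `u` a
permutation `σ u` of its neighbourhood. Colour `u` by `2 κ u`, an edge `u v` of the complement by
`κ u + κ v`, and the edge from `u` to the subdivision vertex of `u v` by `κ u + κ (σ u v)`. The
edges at `u` then get the distinct colours `κ u + κ w`, `w ≠ u`; a subdivision vertex sees at most
four colours, so `n ≥ 5` leaves one for it; its two edges differ as soon as
`κ u + κ (σ u v) ≠ κ v + κ (σ v u)`. Since `n` is odd, `G` is `2m`-regular. If `m ≠ 1`, Hall's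
theorem orients `G` with all in-degrees at most `m`, so every out-degree is `0` or at least `2`,
and `σ u` rotating the out-neighbours of `u` works. If `m = 1`, `G` is an odd cycle: number it
along the cycle and reflect, `σ u v = 2 u - v`; then the condition reads `4 u ≠ 4 v`.

As `n` is odd the colours `2 κ u` are distinct, and degrees (`n - 1 ≠ 2`) keep an automorphism
from mapping original vertices to subdivision vertices; so an automorphism preserving the colouring
fixes `V(G)`, hence every subdivision vertex, which is determined by its two neighbours.
-/

open SimpleGraph

open Function

section

variable {W : Type*} {H : SimpleGraph W} {d : ℕ} {f : W ⊕ H.edgeSet → Fin d}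

theorem SimpleGraph.exists_adj_mk_eq_of_mem_edgeSet {ε : Sym2 W} (hε : ε ∈ H.edgeSet) {x : W}
    (hx : x ∈ ε) : ∃ y, H.Adj x y ∧ s(x, y) = ε :=
  ⟨Sym2.Mem.other hx, by rwa [← mem_edgeSet, Sym2.other_spec hx], Sym2.other_spec hx⟩

theorem SimpleGraph.Iso.ncard_neighborSet_apply (φ : H ≃g H) (x : W) :
    (H.neighborSet (φ x)).ncard = (H.neighborSet x).ncard := by
  rw [← Nat.card_coe_set_eq, ← Nat.card_coe_set_eq]
  exact (Nat.card_congr (φ.mapNeighborSet x)).symm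

theorem IsProperTotalColoring.ncard_neighborSet_add_one_le (hf : IsProperTotalColoring H f)
    (x : W) : (H.neighborSet x).ncard + 1 ≤ d := by
  let edge (y : H.neighborSet x) : H.edgeSet := ⟨s(x, y), y.2⟩
  let colors : Option (H.neighborSet x) → Fin d := fun o => o.elim (f (.inl x)) (f ∘ .inr ∘ edge)
  have hinj : Injective colors := by
    rintro (_ | y) (_ | y') h
    · rfl
    · exact absurd h (hf.2.2 x (edge y') (Sym2.mem_mk_left _ _))
    · exact absurd h.symm (hf.2.2 x (edge y) (Sym2.mem_mk_left _ _))
    · by_contra hne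
      refine hf.2.1 (edge y) (edge y') (fun he => hne ?_) ⟨x, Sym2.mem_mk_left _ _,
        Sym2.mem_mk_left _ _⟩ h
      exact congrArg some (Subtype.ext (Sym2.congr_right.mp (congrArg Subtype.val he)))
  have : Finite (H.neighborSet x) := Finite.of_injective _ (hinj.comp (Option.some_injective _))
  simpa [← Nat.card_coe_set_eq] using Nat.card_le_card_of_injective colors hinj

theorem IsProperTotalColoring.maxDeg_add_one_le [Nonempty W] (hf : IsProperTotalColoring H f) :
    maxDeg H + 1 ≤ d := by
  have hd : 1 ≤ d := Fin.pos_iff_nonempty.mpr ⟨f (.inl (Classical.arbitrary W))⟩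
  suffices maxDeg H ≤ d - 1 by omega
  refine csSup_le' ?_
  rintro k ⟨x, rfl⟩
  have := hf.ncard_neighborSet_add_one_le x
  omega

theorem totalChromaticNumber_eq_of_isProperTotalColoring [Nonempty W]
    (hf : IsProperTotalColoring H f) (hd : maxDeg H + 1 = d) : totalChromaticNumber H = d :=
  le_antisymm (Nat.sInf_le ⟨f, hf⟩) <|
    le_csInf ⟨d, f, hf⟩ fun _ ⟨_, hf'⟩ => hd ▸ hf'.maxDeg_add_one_le

theorem totalDistinguishingChromaticNumber_eq_of_isProperTotalColoring [Nonempty W]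
    (hf : IsProperTotalColoring H f)
    (hfix : ∀ φ : H ≃g H, PreservesTotalColoring H f φ → ∀ v, φ v = v)
    (hd : maxDeg H + 1 = d) : totalDistinguishingChromaticNumber H = d :=
  le_antisymm (Nat.sInf_le ⟨f, hf, hfix⟩) <|
    le_csInf ⟨d, f, hf, hfix⟩ fun _ ⟨_, hf', _⟩ => hd ▸ hf'.maxDeg_add_one_le

end

section

variable {V : Type*} {G : SimpleGraph V}

theorem centralGraph_neighborSet_inl (u : V) :
    (centralGraph G).neighborSet (.inl u) =
      .inl '' {v | u ≠ v ∧ ¬G.Adj u v} ∪ .inr '' {e : G.edgeSet | u ∈ (e : Sym2 V)} := by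
  ext (v | e) <;> simp [centralGraph]

theorem centralGraph_neighborSet_inr {e : G.edgeSet} {a b : V} (he : (e : Sym2 V) = s(a, b)) :
    (centralGraph G).neighborSet (.inr e) = {.inl a, .inl b} := by
  ext (v | f) <;> simp [centralGraph, he]

theorem ncard_centralGraph_neighborSet_inr (e : G.edgeSet) :
    ((centralGraph G).neighborSet (.inr e)).ncard = 2 := by
  obtain ⟨⟨a, b⟩, hab⟩ := e
  rw [centralGraph_neighborSet_inr rfl, Set.ncard_pair (by simpa using hab.ne)]

theorem ncard_centralGraph_neighborSet_inl [Fintype V] (u : V) :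
    ((centralGraph G).neighborSet (.inl u)).ncard = Fintype.card V - 1 := by
  have hdisj : Disjoint (insert u (G.neighborSet u)) {v | u ≠ v ∧ ¬G.Adj u v} :=
    Set.disjoint_left.mpr fun v hv ⟨hne, hnadj⟩ => hv.elim (fun h => hne h.symm) hnadj
  have hunion : insert u (G.neighborSet u) ∪ {v | u ≠ v ∧ ¬G.Adj u v} = Set.univ := by
    ext v
    simp only [Set.mem_union, Set.mem_insert_iff, mem_neighborSet, Set.mem_ofPred_eq,
      Set.mem_univ, iff_true]
    tauto
  have hcard := Set.ncard_union_eq hdisj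
  rw [hunion, Set.ncard_univ, Nat.card_eq_fintype_card,
    Set.ncard_insert_of_notMem G.notMem_neighborSet_self] at hcard
  have hinc : {e : G.edgeSet | u ∈ (e : Sym2 V)}.ncard = (G.neighborSet u).ncard := by
    classical
    rw [← Nat.card_coe_set_eq, ← Nat.card_coe_set_eq]
    exact Nat.card_congr <| (Equiv.subtypeSubtypeEquivSubtypeInter _ (u ∈ ·)).trans
      (G.incidenceSetEquivNeighborSet u)
  rw [centralGraph_neighborSet_inl, Set.ncard_union_eq (by simp [Set.disjoint_left]),
    Set.ncard_image_of_injective _ Sum.inl_injective,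
    Set.ncard_image_of_injective _ Sum.inr_injective, hinc]
  omega

theorem maxDeg_centralGraph [Fintype V] (hV : 3 ≤ Fintype.card V) :
    maxDeg (centralGraph G) = Fintype.card V - 1 := by
  obtain ⟨u⟩ : Nonempty V := Fintype.card_pos_iff.mp (by omega)
  have hmem : Fintype.card V - 1 ∈ {k | ∃ x, k = ((centralGraph G).neighborSet x).ncard} :=
    ⟨.inl u, (ncard_centralGraph_neighborSet_inl u).symm⟩
  refine le_antisymm (csSup_le ⟨_, hmem⟩ ?_) (le_csSup ⟨Fintype.card V - 1, ?_⟩ hmem) <;>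
  · rintro k ⟨v | e, rfl⟩
    · exact (ncard_centralGraph_neighborSet_inl v).le
    · rw [ncard_centralGraph_neighborSet_inr]; omega

theorem exists_centralGraph_iso_apply_inl [Fintype V] (hV : Fintype.card V ≠ 3)
    (φ : centralGraph G ≃g centralGraph G) (u : V) : ∃ u', φ (.inl u) = .inl u' := by
  cases hφ : φ (.inl u) with
  | inl u' => exact ⟨u', rfl⟩
  | inr e =>
    have := SimpleGraph.Iso.ncard_neighborSet_apply φ (.inl u)
    rw [hφ, ncard_centralGraph_neighborSet_inr, ncard_centralGraph_neighborSet_inl] at this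
    omega

theorem centralGraph_iso_apply_eq_self {φ : centralGraph G ≃g centralGraph G}
    (hfix : ∀ u, φ (.inl u) = .inl u) (x : V ⊕ G.edgeSet) : φ x = x := by
  obtain u | e := x
  · exact hfix u
  obtain ⟨⟨a, b⟩, hab⟩ := e
  obtain ⟨e', he'⟩ : ∃ e', φ (.inr ⟨s(a, b), hab⟩) = .inr e' := by
    cases hφ : φ (.inr ⟨s(a, b), hab⟩) with
    | inl w => exact absurd (hφ.trans (hfix w).symm) (φ.injective.ne Sum.inr_ne_inl)
    | inr e' => exact ⟨e', rfl⟩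
  have hmem (v : V) (hv : v ∈ s(a, b)) : v ∈ (e' : Sym2 V) := by
    have := φ.map_adj_iff.mpr (show (centralGraph G).Adj (.inr ⟨s(a, b), hab⟩) (.inl v) from hv)
    rwa [he', hfix] at this
  rw [he']
  exact congrArg _ (Subtype.ext ((Sym2.mem_and_mem_iff hab.ne).mp
    ⟨hmem a (Sym2.mem_mk_left _ _), hmem b (Sym2.mem_mk_right _ _)⟩))

theorem centralGraph_iso_eq_self_of_preservesTotalColoring [Fintype V]
    (hV : Fintype.card V ≠ 3) {d : ℕ} {f : (V ⊕ G.edgeSet) ⊕ (centralGraph G).edgeSet → Fin d}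
    (hf : Injective fun u => f (.inl (.inl u))) (φ : centralGraph G ≃g centralGraph G)
    (hφ : PreservesTotalColoring (centralGraph G) f φ) (x : V ⊕ G.edgeSet) : φ x = x := by
  refine centralGraph_iso_apply_eq_self (fun u => ?_) x
  obtain ⟨u', hu'⟩ := exists_centralGraph_iso_apply_inl hV φ u
  rw [hu', hf (hu' ▸ hφ.1 (.inl u) : f (.inl (.inl u')) = f (.inl (.inl u)))]

open Classical in
noncomputable def otherEnd (e : Sym2 V) (u : V) : V :=
  if h : u ∈ e then Sym2.Mem.other h else u

theorem mk_otherEnd {e : Sym2 V} {u : V} (h : u ∈ e) : s(u, otherEnd e u) = e := by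
  rw [otherEnd, dif_pos h, Sym2.other_spec]

theorem otherEnd_mk_left (a b : V) : otherEnd s(a, b) a = b :=
  Sym2.congr_right.mp (mk_otherEnd (Sym2.mem_mk_left a b))

theorem adj_otherEnd {e : G.edgeSet} {u : V} (h : u ∈ (e : Sym2 V)) :
    G.Adj u (otherEnd (e : Sym2 V) u) := by
  rw [← mem_edgeSet, mk_otherEnd h]; exact e.2

structure CentralLabelling (G : SimpleGraph V) (n : ℕ) where
  κ : V → ZMod n
  injective_κ : Injective κ
  σ : V → Equiv.Perm V
  adj_σ : ∀ {u v}, G.Adj u v → G.Adj u (σ u v)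
  add_ne : ∀ {u v}, G.Adj u v → κ u + κ (σ u v) ≠ κ v + κ (σ v u)

namespace CentralLabelling

variable {n : ℕ} (L : CentralLabelling G n)

noncomputable def weight (u : V) : V ⊕ G.edgeSet → ZMod n
  | .inl v => L.κ v
  | .inr e => L.κ (L.σ u (otherEnd (e : Sym2 V) u))

noncomputable def edgeColor : Sym2 (V ⊕ G.edgeSet) → ZMod n :=
  Sym2.lift ⟨fun x y => match x, y with
    | .inl u, y => L.κ u + L.weight u y
    | .inr e, .inl u => L.κ u + L.weight u (.inr e)
    | .inr _, .inr _ => 0, by rintro (u | e) (v | f) <;> simp [weight, add_comm]⟩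

theorem edgeColor_mk_inl (u : V) (y : V ⊕ G.edgeSet) :
    L.edgeColor s(.inl u, y) = L.κ u + L.weight u y := rfl

theorem weight_injOn (u : V) :
    Set.InjOn (L.weight u) ((centralGraph G).neighborSet (.inl u)) := by
  have key {v : V} {e : G.edgeSet} (hv : ¬G.Adj u v) (he : u ∈ (e : Sym2 V))
      (h : L.weight u (.inl v) = L.weight u (.inr e)) : False :=
    hv (L.injective_κ h ▸ L.adj_σ (adj_otherEnd he))
  rintro (v | e) hy (v' | e') hy' h
  · exact congrArg _ (L.injective_κ h)
  · exact (key hy.2 hy' h).elim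
  · exact (key hy'.2 hy h.symm).elim
  · refine congrArg _ (Subtype.ext ?_)
    rw [← mk_otherEnd hy, ← mk_otherEnd hy', (L.σ u).injective (L.injective_κ h)]

theorem weight_ne {u : V} {y : V ⊕ G.edgeSet} (hy : (centralGraph G).Adj (.inl u) y) :
    L.weight u y ≠ L.κ u := by
  obtain v | e := y
  · exact L.injective_κ.ne (Ne.symm hy.1)
  · exact L.injective_κ.ne (L.adj_σ (adj_otherEnd hy)).ne.symm

def forbidden (e : G.edgeSet) : Set (ZMod n) :=
  {c | ∃ u ∈ (e : Sym2 V), c = 2 * L.κ u ∨ c = L.edgeColor s(.inl u, .inr e)}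

theorem exists_notMem_forbidden (hn : 5 ≤ n) (e : G.edgeSet) : ∃ c, c ∉ L.forbidden e := by
  classical
  have : NeZero n := ⟨by omega⟩
  obtain ⟨⟨a, b⟩, hab⟩ := e
  let s : Finset (ZMod n) := {2 * L.κ a, L.edgeColor s(.inl a, .inr ⟨s(a, b), hab⟩),
    2 * L.κ b, L.edgeColor s(.inl b, .inr ⟨s(a, b), hab⟩)}
  have hs : s.card < (Finset.univ : Finset (ZMod n)).card := by
    rw [Finset.card_univ, ZMod.card]
    exact (Finset.card_le_four).trans_lt (by omega)
  obtain ⟨c, -, hc⟩ := Finset.exists_mem_notMem_of_card_lt_card hs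
  refine ⟨c, fun ⟨u, hu, hcu⟩ => hc ?_⟩
  rcases Sym2.mem_iff.mp hu with rfl | rfl <;> simp_all [s]

theorem edgeColor_mk_inr_inl {e : G.edgeSet} {a b : V} (he : (e : Sym2 V) = s(a, b)) :
    L.edgeColor s(.inr e, .inl a) = L.κ a + L.κ (L.σ a b) := by
  rw [Sym2.eq_swap, edgeColor_mk_inl, weight, he, otherEnd_mk_left]

noncomputable def totalColoring (hn : 5 ≤ n) :
    (V ⊕ G.edgeSet) ⊕ (centralGraph G).edgeSet → ZMod n
  | .inl (.inl u) => 2 * L.κ u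
  | .inl (.inr e) => (L.exists_notMem_forbidden hn e).choose
  | .inr ε => L.edgeColor ε

theorem totalColoring_inr_notMem_forbidden (hn : 5 ≤ n) (e : G.edgeSet) :
    L.totalColoring hn (.inl (.inr e)) ∉ L.forbidden e :=
  (L.exists_notMem_forbidden hn e).choose_spec

theorem injective_totalColoring_inl_inl (hn : 5 ≤ n) (hodd : Odd n) :
    Injective fun u => L.totalColoring hn (.inl (.inl u)) := by
  have h2 : IsUnit (2 : ZMod n) := (ZMod.isUnit_iff_coprime 2 n).mpr (Nat.coprime_two_left.mpr hodd)
  exact Injective.comp (fun a b h => h2.mul_left_cancel h : Injective (2 * · : ZMod n → ZMod n))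
    L.injective_κ

theorem totalColoring_ne_of_adj (hn : 5 ≤ n) (hodd : Odd n) {x y : V ⊕ G.edgeSet}
    (h : (centralGraph G).Adj x y) : L.totalColoring hn (.inl x) ≠ L.totalColoring hn (.inl y) := by
  have hinr {u : V} {e : G.edgeSet} (hu : u ∈ (e : Sym2 V)) :
      L.totalColoring hn (.inl (.inl u)) ≠ L.totalColoring hn (.inl (.inr e)) :=
    fun hc => L.totalColoring_inr_notMem_forbidden hn e ⟨u, hu, .inl hc.symm⟩
  obtain u | e := x <;> obtain v | f := y
  · exact (L.injective_totalColoring_inl_inl hn hodd).ne h.1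
  · exact hinr h
  · exact (hinr h).symm
  · exact h.elim

theorem totalColoring_ne_of_mem_of_mem (hn : 5 ≤ n) {ε ε' : (centralGraph G).edgeSet} (hne : ε ≠ ε')
    {x : V ⊕ G.edgeSet} (hx : x ∈ (ε : Sym2 _)) (hx' : x ∈ (ε' : Sym2 _)) :
    L.totalColoring hn (.inr ε) ≠ L.totalColoring hn (.inr ε') := by
  obtain ⟨y, hy, hεy⟩ := exists_adj_mk_eq_of_mem_edgeSet ε.2 hx
  obtain ⟨y', hy', hεy'⟩ := exists_adj_mk_eq_of_mem_edgeSet ε'.2 hx'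
  have hyy' : y ≠ y' := fun h => hne (Subtype.ext (hεy.symm.trans (h ▸ hεy')))
  simp only [totalColoring, ← hεy, ← hεy']
  obtain u | e := x
  · rw [edgeColor_mk_inl, edgeColor_mk_inl]
    exact fun h => hyy' (L.weight_injOn u hy hy' (add_left_cancel h))
  obtain a | _ := y
  on_goal 2 => exact hy.elim
  obtain b | _ := y'
  on_goal 2 => exact hy'.elim
  have he : (e : Sym2 V) = s(a, b) :=
    (Sym2.mem_and_mem_iff fun h => hyy' (congrArg _ h)).mp ⟨hy, hy'⟩
  rw [L.edgeColor_mk_inr_inl he, L.edgeColor_mk_inr_inl (he.trans Sym2.eq_swap)]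
  exact L.add_ne (show s(a, b) ∈ G.edgeSet from he ▸ e.2)

theorem totalColoring_ne_of_mem (hn : 5 ≤ n) {x : V ⊕ G.edgeSet} {ε : (centralGraph G).edgeSet}
    (hx : x ∈ (ε : Sym2 _)) : L.totalColoring hn (.inl x) ≠ L.totalColoring hn (.inr ε) := by
  obtain ⟨y, hy, hεy⟩ := exists_adj_mk_eq_of_mem_edgeSet ε.2 hx
  obtain u | e := x
  · simp only [totalColoring, ← hεy, edgeColor_mk_inl, two_mul]
    exact fun h => L.weight_ne hy (add_left_cancel h).symm
  obtain u | _ := y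
  · simp only [totalColoring, ← hεy, Sym2.eq_swap]
    exact fun h => L.totalColoring_inr_notMem_forbidden hn e ⟨u, hy, .inr h⟩
  · exact hy.elim

end CentralLabelling

theorem CentralLabelling.exists_isProperTotalColoring {n : ℕ} (L : CentralLabelling G n)
    (hn : 5 ≤ n) (hodd : Odd n) :
    ∃ f : (V ⊕ G.edgeSet) ⊕ (centralGraph G).edgeSet → Fin n,
      IsProperTotalColoring (centralGraph G) f ∧ Injective fun u => f (.inl (.inl u)) := by
  have : NeZero n := ⟨by omega⟩
  let χ := (ZMod.finEquiv n).symm.toEquiv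
  refine ⟨χ ∘ L.totalColoring hn,
    ⟨fun x y h => χ.injective.ne (L.totalColoring_ne_of_adj hn hodd h),
    fun ε ε' hne ⟨x, hx, hx'⟩ => χ.injective.ne (L.totalColoring_ne_of_mem_of_mem hn hne hx hx'),
    fun x ε hx => χ.injective.ne (L.totalColoring_ne_of_mem hn hx)⟩,
    χ.injective.comp (L.injective_totalColoring_inl_inl hn hodd)⟩

theorem SimpleGraph.Connected.exists_isCycle_forall_mem_support [Finite V] (hconn : G.Connected)
    (h2 : ∀ v, (G.neighborSet v).ncard = 2) :
    ∃ (v₀ : V) (p : G.Walk v₀ v₀), p.IsCycle ∧ ∀ v, v ∈ p.support := by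
  obtain ⟨v₀⟩ := hconn.nonempty
  obtain ⟨p, hp, hverts⟩ :=
    (show G.IsCycles from fun v _ => h2 v).exists_cycle_toSubgraph_verts_eq_connectedComponentSupp
      (c := G.connectedComponentMk v₀) rfl (Set.nonempty_of_ncard_ne_zero (by simp [h2]))
  refine ⟨v₀, p, hp, fun v => ?_⟩
  rw [← Walk.mem_verts_toSubgraph, hverts, ConnectedComponent.mem_supp_iff,
    ConnectedComponent.eq]
  exact hconn.preconnected v v₀

theorem SimpleGraph.Walk.IsCycle.exists_equiv_zmod [Fintype V] {v₀ : V} {p : G.Walk v₀ v₀}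
    (hp : p.IsCycle) (hsupp : ∀ v, v ∈ p.support) :
    ∃ κ : V ≃ ZMod (Fintype.card V), p.length = Fintype.card V ∧
      ∀ i ≤ p.length, κ (p.getVert i) = i := by
  set n := Fintype.card V
  have hinj : Set.InjOn p.getVert {i | i ≤ p.length - 1} := hp.getVert_injOn'
  have hL := hp.three_le_length
  have hsurj (v : V) : ∃ i < p.length, p.getVert i = v := by
    obtain ⟨i, rfl, hi⟩ := Walk.mem_support_iff_exists_getVert.mp (hsupp v)
    rcases hi.lt_or_eq with hi | rfl
    · exact ⟨i, hi, rfl⟩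
    · exact ⟨0, by omega, by simp⟩
  have hn : p.length = n := by
    classical
    have himage : (Finset.range p.length).image p.getVert = Finset.univ :=
      Finset.eq_univ_of_forall fun v => by simpa using hsurj v
    have := Finset.card_image_of_injOn (s := Finset.range p.length)
      (hinj.mono fun i hi => by simp at hi ⊢; omega)
    rwa [himage, Finset.card_univ, Finset.card_range, eq_comm] at this
  have : NeZero n := ⟨by omega⟩
  have hbij : Bijective fun k : ZMod n => p.getVert k.val := by
    refine ⟨fun a b h => ZMod.val_injective n (hinj ?_ ?_ h), fun v => ?_⟩
    · have := a.val_lt; simp only [Set.mem_ofPred_eq]; omega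
    · have := b.val_lt; simp only [Set.mem_ofPred_eq]; omega
    · obtain ⟨i, hi, rfl⟩ := hsurj v
      refine ⟨i, show p.getVert (i : ZMod n).val = _ from ?_⟩
      rw [ZMod.val_natCast, Nat.mod_eq_of_lt (hn ▸ hi)]
  refine ⟨(Equiv.ofBijective _ hbij).symm, hn, fun i hi => ?_⟩
  rw [Equiv.symm_apply_eq, Equiv.ofBijective_apply, ZMod.val_natCast]
  rcases hi.lt_or_eq with hi | rfl
  · rw [Nat.mod_eq_of_lt (hn ▸ hi)]
  · rw [hn, Nat.mod_self, Walk.getVert_zero, ← hn, Walk.getVert_length]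

theorem SimpleGraph.Connected.exists_equiv_zmod_adj_iff [Fintype V] (hconn : G.Connected)
    (h2 : ∀ v, (G.neighborSet v).ncard = 2) :
    ∃ κ : V ≃ ZMod (Fintype.card V), ∀ u v, G.Adj u v ↔ κ v = κ u + 1 ∨ κ u = κ v + 1 := by
  classical
  obtain ⟨v₀, p, hp, hsupp⟩ := hconn.exists_isCycle_forall_mem_support h2
  obtain ⟨κ, hL, hκ⟩ := hp.exists_equiv_zmod hsupp
  have : NeZero (Fintype.card V) := ⟨by have := hp.three_le_length; omega⟩
  have hstep (a : ZMod (Fintype.card V)) :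
      s(p.getVert a.val, p.getVert (a.val + 1)) = s(κ.symm a, κ.symm (a + 1)) := by
    have := a.val_lt
    rw [κ.eq_symm_apply.mpr (hκ _ (by omega)), κ.eq_symm_apply.mpr (hκ _ (by omega))]
    simp
  refine ⟨κ, fun u v => ?_⟩
  rw [← hp.adj_toSubgraph_iff_of_isCycles (fun v _ => h2 v)
    (p.mem_verts_toSubgraph.mpr (hsupp u)), Walk.toSubgraph_adj_iff]
  constructor
  · rintro ⟨i, he, hi⟩
    have := congrArg (Sym2.map κ) he
    rw [Sym2.map_mk, Sym2.map_mk, hκ i hi.le, hκ (i + 1) hi, Nat.cast_succ] at this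
    rcases Sym2.eq_iff.mp this with ⟨hu, hv⟩ | ⟨hv, hu⟩
    · exact .inl (hu ▸ hv.symm)
    · exact .inr (hv ▸ hu.symm)
  · rintro (h | h)
    · refine ⟨(κ u).val, by rw [hstep, ← h]; simp, by rw [hL]; exact ZMod.val_lt _⟩
    · refine ⟨(κ v).val, by rw [hstep, ← h, Sym2.eq_swap]; simp, by rw [hL]; exact ZMod.val_lt _⟩

def CentralLabelling.ofReflection {n : ℕ} (κ : V ≃ ZMod n) (hodd : Odd n)
    (hG : ∀ {u v}, G.Adj u v → G.Adj u (κ.symm (2 * κ u - κ v))) : CentralLabelling G n where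
  κ := κ
  injective_κ := κ.injective
  σ u := (κ.trans (Equiv.subLeft (2 * κ u))).trans κ.symm
  adj_σ := hG
  add_ne {u v} h heq := by
    have h4 : IsUnit (4 : ZMod n) := (ZMod.isUnit_iff_coprime 4 n).mpr <|
      (Nat.Coprime.pow_left 2 (Nat.coprime_two_left.mpr hodd) :)
    simp only [Equiv.trans_apply, Equiv.subLeft_apply, Equiv.apply_symm_apply] at heq
    exact h.ne (κ.injective (h4.mul_left_cancel (by linear_combination heq)))

theorem exists_perm_forall_ne {α : Type*} [Finite α] (h : Nat.card α ≠ 1) :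
    ∃ τ : Equiv.Perm α, ∀ x, τ x ≠ x := by
  obtain ⟨k, ⟨e⟩⟩ := Finite.exists_equiv_fin α
  have hk : k ≠ 1 := by rwa [Nat.card_congr e, Nat.card_fin] at h
  refine ⟨e.symm.permCongr (finRotate k), fun x hx => ?_⟩
  have hfix : finRotate k (e x) = e x := by simpa [Equiv.permCongr_apply] using congrArg e hx
  rcases Nat.lt_or_ge k 2 with hk2 | hk2
  · obtain rfl : k = 0 := by omega
    exact (e x).elim0
  · exact Equiv.Perm.mem_support.mp (by simp [support_finRotate_of_le hk2]) hfix

theorem Set.exists_perm_ne_of_ncard_ne_one {α : Type*} (s : Set α) [Finite s] (hs : s.ncard ≠ 1) :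
    ∃ σ : Equiv.Perm α, ∀ x, (x ∈ s → σ x ∈ s ∧ σ x ≠ x) ∧ (x ∉ s → σ x = x) := by
  classical
  obtain ⟨τ, hτ⟩ := exists_perm_forall_ne (α := s) (by rwa [Nat.card_coe_set_eq])
  refine ⟨Equiv.Perm.ofSubtype τ, fun x => ⟨fun hx => ?_, Equiv.Perm.ofSubtype_apply_of_not_mem τ⟩⟩
  rw [Equiv.Perm.ofSubtype_apply_of_mem τ hx]
  exact ⟨(τ ⟨x, hx⟩).2, fun h => hτ ⟨x, hx⟩ (Subtype.ext h)⟩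

structure SimpleGraph.IsOrientation (G : SimpleGraph V) (D : V → V → Prop) : Prop where
  adj : ∀ {u v}, D u v → G.Adj u v
  iff_not : ∀ {u v}, G.Adj u v → (D u v ↔ ¬D v u)

theorem SimpleGraph.IsOrientation.ncard_add_ncard [Finite V] {D : V → V → Prop}
    (hD : G.IsOrientation D) (u : V) :
    {v | D u v}.ncard + {v | D v u}.ncard = (G.neighborSet u).ncard := by
  have hdisj : Disjoint {v | D u v} {v | D v u} :=
    Set.disjoint_left.mpr fun v h h' => (hD.iff_not (hD.adj h)).mp h h'
  rw [← Set.ncard_union_eq hdisj]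
  congr 1
  ext v
  simp only [Set.mem_union, Set.mem_ofPred_eq, mem_neighborSet]
  constructor
  · rintro (h | h)
    · exact hD.adj h
    · exact (hD.adj h).symm
  · intro h
    by_cases hv : D u v
    · exact .inl hv
    · exact .inr (not_not.mp ((hD.iff_not h).not.mp hv))

theorem SimpleGraph.card_le_card_biUnion_toFinset_mul [Fintype V] [DecidableEq V]
    [DecidableRel G.Adj] {m : ℕ} (hdeg : ∀ v, G.degree v ≤ 2 * m) (S : Finset G.edgeSet) :
    S.card ≤ (S.biUnion fun e => (e : Sym2 V).toFinset).card * m := by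
  set W := S.biUnion fun e => (e : Sym2 V).toFinset
  suffices S.card * 2 ≤ W.card * (2 * m) by linarith
  refine Finset.card_mul_le_card_mul (fun (e : G.edgeSet) (v : V) => v ∈ (e : Sym2 V))
    (fun e he => ?_) (fun v _ => ?_)
  · rw [← Sym2.card_toFinset_of_not_isDiag _ (G.not_isDiag_of_mem_edgeSet e.2)]
    refine Finset.card_le_card fun v hv => ?_
    simp only [Finset.bipartiteAbove, Finset.mem_filter, W, Finset.mem_biUnion]
    exact ⟨⟨e, he, hv⟩, Sym2.mem_toFinset.mp hv⟩
  · refine (Finset.card_le_card_of_injOn Subtype.val (t := G.incidenceFinset v)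
      (fun e he => ?_) Subtype.val_injective.injOn).trans ?_
    · simp only [Finset.bipartiteBelow, Finset.coe_filter, Set.mem_ofPred_eq] at he
      simpa [incidenceSet] using he.2
    · rw [card_incidenceFinset_eq_degree]; exact hdeg v

theorem SimpleGraph.exists_isOrientation_ncard_le [Fintype V] {m : ℕ}
    (h : ∀ v, (G.neighborSet v).ncard ≤ 2 * m) :
    ∃ D : V → V → Prop, G.IsOrientation D ∧ ∀ v, {u | D u v}.ncard ≤ m := by
  classical
  have hdeg (v : V) : G.degree v ≤ 2 * m := by
    rw [← card_neighborSet_eq_degree, ← Nat.card_eq_fintype_card, Nat.card_coe_set_eq]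
    exact h v
  let t (e : G.edgeSet) : Finset (V × Fin m) := (e : Sym2 V).toFinset ×ˢ Finset.univ
  have hall (S : Finset G.edgeSet) : S.card ≤ (S.biUnion t).card := by
    have hW : S.biUnion t = (S.biUnion fun e => (e : Sym2 V).toFinset) ×ˢ Finset.univ := by
      ext ⟨v, i⟩; simp [t]
    rw [hW, Finset.card_product, Finset.card_univ, Fintype.card_fin]
    exact G.card_le_card_biUnion_toFinset_mul hdeg S
  obtain ⟨head, hinj, hmem⟩ := (Finset.all_card_le_biUnion_card_iff_existsInjective' t).mp hall
  have hhead (e : G.edgeSet) : (head e).1 ∈ (e : Sym2 V) :=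
    Sym2.mem_toFinset.mp (Finset.mem_product.mp (hmem e)).1
  refine ⟨fun u v => ∃ h : G.Adj u v, (head ⟨s(u, v), h⟩).1 = v, ⟨fun ⟨h, _⟩ => h, ?_⟩, ?_⟩
  · intro u v huv
    have hswap : (⟨s(v, u), huv.symm⟩ : G.edgeSet) = ⟨s(u, v), huv⟩ := Subtype.ext Sym2.eq_swap
    simp only [exists_prop_of_true huv, exists_prop_of_true huv.symm, hswap]
    rcases Sym2.mem_iff.mp (hhead ⟨s(u, v), huv⟩) with h | h <;> simp [h, huv.ne, huv.ne.symm]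
  · intro v
    rw [← Nat.card_coe_set_eq]
    refine (Nat.card_le_card_of_injective (fun u => (head ⟨s(u.1, v), u.2.1⟩).2)
      fun u w huw => ?_).trans (Nat.card_fin m).le
    have := hinj (Prod.ext (u.2.2.trans w.2.2.symm) huw)
    exact Subtype.ext (Sym2.congr_left.mp (congrArg Subtype.val this))

theorem CentralLabelling.nonempty_of_isOrientation [Finite V] {n : ℕ} (κ : V → ZMod n)
    (hκ : Injective κ) {D : V → V → Prop} (hD : G.IsOrientation D)
    (hout : ∀ u, {v | D u v}.ncard ≠ 1) : Nonempty (CentralLabelling G n) := by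
  choose σ hσ using fun u => Set.exists_perm_ne_of_ncard_ne_one {v | D u v} (hout u)
  have key {u v : V} (h : G.Adj u v) (huv : D u v) : κ u + κ (σ u v) ≠ κ v + κ (σ v u) := by
    rw [(hσ v u).2 ((hD.iff_not h).mp huv), add_comm (κ v)]
    exact fun heq => ((hσ u v).1 huv).2 (hκ (add_left_cancel heq))
  refine ⟨⟨κ, hκ, σ, fun {u v} h => ?_, fun {u v} h => ?_⟩⟩
  · by_cases huv : D u v
    · exact hD.adj ((hσ u v).1 huv).1
    · rwa [(hσ u v).2 huv]
  · by_cases huv : D u v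
    · exact key h huv
    · exact (key h.symm (not_not.mp ((hD.iff_not h).not.mp huv))).symm

theorem SimpleGraph.even_ncard_neighborSet [Fintype V] (hodd : Odd (Fintype.card V)) {r : ℕ}
    (hr : ∀ v, (G.neighborSet v).ncard = r) : Even r := by
  classical
  by_contra hr'
  have hdeg (v : V) : Odd (G.degree v) := by
    rw [← card_neighborSet_eq_degree, ← Nat.card_eq_fintype_card, Nat.card_coe_set_eq, hr]
    exact Nat.not_even_iff_odd.mp hr'
  have := G.even_card_odd_degree_vertices
  rw [Finset.filter_true_of_mem fun v _ => hdeg v, Finset.card_univ] at this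
  exact Nat.not_even_iff_odd.mpr hodd this

theorem CentralLabelling.nonempty [Fintype V] (hconn : G.Connected) (hreg : IsRegularGraph G)
    (hodd : Odd (Fintype.card V)) : Nonempty (CentralLabelling G (Fintype.card V)) := by
  obtain ⟨u₀⟩ := hconn.nonempty
  have hr (v : V) : (G.neighborSet v).ncard = (G.neighborSet u₀).ncard := hreg v u₀
  obtain ⟨m, hm⟩ := G.even_ncard_neighborSet hodd hr
  by_cases hm1 : m = 1
  · obtain ⟨κ, hκ⟩ := hconn.exists_equiv_zmod_adj_iff fun v => by rw [hr]; omega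
    refine ⟨.ofReflection κ hodd fun {u v} h => ?_⟩
    rw [hκ, Equiv.apply_symm_apply]
    rcases (hκ u v).mp h with h | h
    · exact .inr (by rw [h]; ring)
    · exact .inl (by rw [h]; ring)
  · obtain ⟨D, hD, hin⟩ := G.exists_isOrientation_ncard_le (m := m) fun v => by rw [hr]; omega
    have : NeZero (Fintype.card V) := ⟨(Fintype.card_pos_iff.mpr ⟨u₀⟩).ne'⟩
    refine nonempty_of_isOrientation _ (Fintype.equivOfCardEq (ZMod.card _).symm).injective hD
      fun u => ?_
    have := hD.ncard_add_ncard u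
    have := hin u
    have := hr u
    omega

end

/-- For a connected regular graph `G` of odd order `n ≥ 5`,
`χ''_D(C(G)) = Δ(C(G)) + 1 = n`; consequently `C(G)` is Type 1. -/
theorem stmt_12 {V : Type*} [Fintype V] (G : SimpleGraph V)
    (hconn : G.Connected) (hreg : IsRegularGraph G)
    (hn : 5 ≤ Fintype.card V) (hodd : Odd (Fintype.card V)) :
    totalDistinguishingChromaticNumber (centralGraph G) = maxDeg (centralGraph G) + 1 ∧
    maxDeg (centralGraph G) + 1 = Fintype.card V ∧
    totalChromaticNumber (centralGraph G) = maxDeg (centralGraph G) + 1 := by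
  have := hconn.nonempty
  obtain ⟨L⟩ := CentralLabelling.nonempty hconn hreg hodd
  obtain ⟨f, hf, hinj⟩ := L.exists_isProperTotalColoring hn hodd
  have hΔ : maxDeg (centralGraph G) + 1 = Fintype.card V := by
    rw [maxDeg_centralGraph (by omega)]
    omega
  refine ⟨?_, hΔ, ?_⟩ <;> rw [hΔ]
  · exact totalDistinguishingChromaticNumber_eq_of_isProperTotalColoring hf
      (centralGraph_iso_eq_self_of_preservesTotalColoring (by omega) hinj) hΔ
  · exact totalChromaticNumber_eq_of_isProperTotalColoring hf hΔ
end
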